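/- arXiv:2305.01100 — 2 statements merged into one kernel-verified Lean document; each statement's English description precedes it below -/
import Mathlib

section
/- Let n ≥ 2 be an integer, let σ be the cyclic permutation (1,2,…,n) of {1,…,n}, and let τ be a permutation of {1,…,n} whose cycle decomposition consists of exactly two cycles (orbits), each of which is increasing, i.e., τ sends each element of its orbit to the smallest strictly larger element of that orbit, and sends the largest element of the orbit to the smallest. Then the cycle decomposition of σ∘τ⁻¹ contains exactly one cycle of length greater than 1 (all other points are fixed points of σ∘τ⁻¹). -/
open Finset

variable {n : ℕ}

/-- The number of cycles of a permutation, counting fixed points as cycles of length 1. -/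
def cycleCount (π : Equiv.Perm (Fin n)) : ℕ :=
  π.cycleType.card + (univ.filter fun x => π x = x).card

/-- The next element of `x` in the finite set `b`, in cyclic increasing order:
the smallest element of `b` strictly larger than `x` if one exists, otherwise the
smallest element of `b` (and `x` itself if `b` is empty). -/
def nextIn (b : Finset (Fin n)) (x : Fin n) : Fin n :=
  if h : (b.filter fun y => x < y).Nonempty then (b.filter fun y => x < y).min' h
  else if h' : b.Nonempty then b.min' h' else x

/-- The orbit (cycle) of `x` under the permutation `τ`, as a finite set. -/
def orbitFinset (τ : Equiv.Perm (Fin n)) (x : Fin n) : Finset (Fin n) :=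
  univ.filter fun y => τ.SameCycle x y

lemma mem_orbitFinset {τ : Equiv.Perm (Fin n)} {x y : Fin n} :
    y ∈ orbitFinset τ x ↔ τ.SameCycle x y := by
  simp [orbitFinset]

lemma orbit_image_card_le (τ : Equiv.Perm (Fin n)) :
    ((univ : Finset (Fin n)).image (orbitFinset τ)).card ≤ cycleCount τ := by
  classical
  have hsplit : (univ : Finset (Fin n)) = τ.support ∪ (univ.filter fun x => τ x = x) := by
    ext x
    simp [Equiv.Perm.mem_support]
    tauto
  have h1 : (τ.support.image (orbitFinset τ)).card ≤ τ.cycleType.card := by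
    have hsub : τ.support.image (orbitFinset τ) ⊆
        τ.cycleFactorsFinset.image Equiv.Perm.support := by
      intro s hs
      rcases mem_image.1 hs with ⟨x, hx, rfl⟩
      refine mem_image.2 ⟨τ.cycleOf x, Equiv.Perm.cycleOf_mem_cycleFactorsFinset_iff.2 hx, ?_⟩
      ext y
      rw [mem_orbitFinset, Equiv.Perm.mem_support_cycleOf_iff, and_iff_left hx]
    calc (τ.support.image (orbitFinset τ)).card
        ≤ (τ.cycleFactorsFinset.image Equiv.Perm.support).card := card_le_card hsub
      _ ≤ τ.cycleFactorsFinset.card := card_image_le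
      _ = τ.cycleType.card := by rw [Equiv.Perm.cycleType_def, Multiset.card_map]; rfl
  calc ((univ : Finset (Fin n)).image (orbitFinset τ)).card
      = ((τ.support ∪ (univ.filter fun x => τ x = x)).image (orbitFinset τ)).card := by
        rw [← hsplit]
    _ = ((τ.support.image (orbitFinset τ)) ∪
          ((univ.filter fun x => τ x = x).image (orbitFinset τ))).card := by
        rw [image_union]
    _ ≤ (τ.support.image (orbitFinset τ)).card +
          ((univ.filter fun x => τ x = x).image (orbitFinset τ)).card := card_union_le _ _
    _ ≤ τ.cycleType.card + (univ.filter fun x => τ x = x).card :=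
        Nat.add_le_add h1 card_image_le

lemma two_orbits {τ : Equiv.Perm (Fin n)} (horb : cycleCount τ = 2)
    {a b c : Fin n} (hab : ¬ τ.SameCycle a b) (hac : ¬ τ.SameCycle a c) :
    τ.SameCycle b c := by
  classical
  by_contra hbc
  have hoab : orbitFinset τ a ≠ orbitFinset τ b := fun h =>
    hab (mem_orbitFinset.1 (h ▸ mem_orbitFinset.2 (Equiv.Perm.SameCycle.refl τ b)))
  have hoac : orbitFinset τ a ≠ orbitFinset τ c := fun h =>
    hac (mem_orbitFinset.1 (h ▸ mem_orbitFinset.2 (Equiv.Perm.SameCycle.refl τ c)))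
  have hobc : orbitFinset τ b ≠ orbitFinset τ c := fun h =>
    hbc (mem_orbitFinset.1 (h ▸ mem_orbitFinset.2 (Equiv.Perm.SameCycle.refl τ c)))
  have hsub : ({orbitFinset τ a, orbitFinset τ b, orbitFinset τ c} :
      Finset (Finset (Fin n))) ⊆ (univ : Finset (Fin n)).image (orbitFinset τ) := by
    intro s hs
    simp only [mem_insert, mem_singleton] at hs
    rcases hs with rfl | rfl | rfl <;> exact mem_image.2 ⟨_, mem_univ _, rfl⟩
  have hcard : ({orbitFinset τ a, orbitFinset τ b, orbitFinset τ c} :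
      Finset (Finset (Fin n))).card = 3 := by
    rw [card_insert_of_notMem (by simp [hoab, hoac]),
      card_insert_of_notMem (by simp [hobc]), card_singleton]
  have := (hcard ▸ card_le_card hsub).trans (orbit_image_card_le τ)
  omega

theorem one_nontrivial_cycle_of_two_increasing_cycles (n : ℕ) (hn : 2 ≤ n)
    (τ : Equiv.Perm (Fin n))
    (horb : cycleCount τ = 2)
    (hinc : ∀ x : Fin n, τ x = nextIn (orbitFinset τ x) x) :
    (finRotate n * τ⁻¹).cycleType.card = 1 := by
  classical
  obtain ⟨m, rfl⟩ : ∃ m, n = m + 2 := ⟨n - 2, by omega⟩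
  set π := finRotate (m + 2) * τ⁻¹ with hπdef
  have hπ : ∀ y : Fin (m + 2), π y = τ⁻¹ y + 1 := by
    intro y
    rw [hπdef, Equiv.Perm.mul_apply, finRotate_succ_apply]
  have hval : ∀ a : Fin (m + 2), ((a + 1 : Fin (m + 2)) : ℕ) =
      if (a : ℕ) = m + 1 then 0 else (a : ℕ) + 1 := by
    intro a
    rw [Fin.val_add_one]
    congr 1
    simp [Fin.ext_iff, Fin.last]
  -- Sublemma A: consecutive elements of a common orbit
  have stepA : ∀ w z : Fin (m + 2), (z : ℕ) = (w : ℕ) + 1 → τ.SameCycle w z → τ w = z := by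
    intro w z hz hs
    rw [hinc w]
    unfold nextIn
    have hzmem : z ∈ (orbitFinset τ w).filter (fun y => w < y) :=
      mem_filter.2 ⟨mem_orbitFinset.2 hs, Fin.lt_def.2 (by omega)⟩
    rw [dif_pos ⟨z, hzmem⟩]
    refine le_antisymm (min'_le _ _ hzmem) ?_
    have hm := mem_filter.1 (min'_mem _ ⟨z, hzmem⟩)
    have := Fin.lt_def.1 hm.2
    exact Fin.le_def.2 (by omega)
  -- Key claim: if y < π y then every z < y is fixed by π
  have key : ∀ y : Fin (m + 2), y < π y → ∀ z, z < y → π z = z := by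
    intro y hy
    set x := τ⁻¹ y with hxdef
    have hτx : τ x = y := Equiv.apply_symm_apply τ y
    have hπy : π y = x + 1 := hπ y
    have hyx : (y : ℕ) ≤ (x : ℕ) := by
      by_contra h
      push_neg at h
      have hxl : (x : ℕ) ≠ m + 1 := by have := y.isLt; omega
      have h2 : ((π y : Fin (m + 2)) : ℕ) = (x : ℕ) + 1 := by
        rw [hπy, hval x, if_neg hxl]
      have := Fin.lt_def.1 hy
      omega
    have hxlt : (x : ℕ) < m + 1 := by
      by_contra h
      push_neg at h
      have hx1 : (x : ℕ) = m + 1 := by have := x.isLt; omega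
      have h2 : ((π y : Fin (m + 2)) : ℕ) = 0 := by rw [hπy, hval x, if_pos hx1]
      have := Fin.lt_def.1 hy
      omega
    have hfe : ¬ ((orbitFinset τ x).filter (fun u => x < u)).Nonempty := by
      intro hne
      have h1 := hinc x
      rw [nextIn, dif_pos hne] at h1
      have hmem := mem_filter.1 (min'_mem _ hne)
      rw [← h1] at hmem
      have := Fin.lt_def.1 hmem.2
      rw [hτx] at this
      omega
    have hmax : ∀ u : Fin (m + 2), τ.SameCycle x u → (u : ℕ) ≤ (x : ℕ) := by
      intro u hu
      by_contra h
      push_neg at h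
      exact hfe ⟨u, mem_filter.2 ⟨mem_orbitFinset.2 hu, Fin.lt_def.2 h⟩⟩
    have hxmem : (orbitFinset τ x).Nonempty :=
      ⟨x, mem_orbitFinset.2 (Equiv.Perm.SameCycle.refl τ x)⟩
    have hτx2 : τ x = (orbitFinset τ x).min' hxmem := by
      rw [hinc x, nextIn, dif_neg hfe, dif_pos hxmem]
    have hmin : ∀ u : Fin (m + 2), τ.SameCycle x u → (y : ℕ) ≤ (u : ℕ) := by
      intro u hu
      have := min'_le _ _ (mem_orbitFinset.2 hu)
      rw [← hτx2, hτx] at this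
      exact Fin.le_def.1 this
    intro z hz
    have hzy := Fin.lt_def.1 hz
    have hznot : ¬ τ.SameCycle x z := fun h => by have := hmin z h; omega
    rcases Nat.eq_zero_or_pos (z : ℕ) with hz0 | hz1
    · -- z is 0 : τ sends the top element m+1 to z
      set L : Fin (m + 2) := ⟨m + 1, by omega⟩ with hLdef
      have hLnot : ¬ τ.SameCycle x L := fun h => by
        have := hmax L h; simp [hLdef] at this; omega
      have hLz : τ.SameCycle L z := two_orbits horb hLnot hznot
      have hτL : τ L = z := by
        rw [hinc L]
        unfold nextIn
        have hfeL : ¬ ((orbitFinset τ L).filter (fun u => L < u)).Nonempty := by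
          rintro ⟨u, hu⟩
          have := Fin.lt_def.1 (mem_filter.1 hu).2
          have := u.isLt
          simp [hLdef] at *
          omega
        have hLmem : (orbitFinset τ L).Nonempty :=
          ⟨L, mem_orbitFinset.2 (Equiv.Perm.SameCycle.refl τ L)⟩
        rw [dif_neg hfeL, dif_pos hLmem]
        refine le_antisymm (min'_le _ _ (mem_orbitFinset.2 hLz)) ?_
        exact Fin.le_def.2 (by omega)
      have hτinv : τ⁻¹ z = L := by rw [← hτL]; exact Equiv.symm_apply_apply τ L
      have : ((π z : Fin (m + 2)) : ℕ) = 0 := by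
        rw [hπ z, hτinv, hval L, if_pos (by simp [hLdef])]
      exact Fin.ext (by omega)
    · -- z ≥ 1 : τ sends z - 1 to z
      set w : Fin (m + 2) := ⟨(z : ℕ) - 1, by omega⟩ with hwdef
      have hwval : ((w : Fin (m + 2)) : ℕ) = (z : ℕ) - 1 := rfl
      have hwnot : ¬ τ.SameCycle x w := fun h => by
        have := hmin w h; rw [hwval] at this; omega
      have hwz : τ.SameCycle w z := two_orbits horb hwnot hznot
      have hτw : τ w = z := stepA w z (by rw [hwval]; omega) hwz
      have hτinv : τ⁻¹ z = w := by rw [← hτw]; exact Equiv.symm_apply_apply τ w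
      have hwne : ((w : Fin (m + 2)) : ℕ) ≠ m + 1 := by
        rw [hwval]; have := y.isLt; omega
      have : ((π z : Fin (m + 2)) : ℕ) = (z : ℕ) := by
        rw [hπ z, hτinv, hval w, if_neg hwne, hwval]; omega
      exact Fin.ext (by omega)
  -- π has nonempty support
  have hne : π.support.Nonempty := by
    rw [nonempty_iff_ne_empty]
    intro h
    have hπ1 : π = 1 := Equiv.Perm.support_eq_empty_iff.1 h
    have hτσ : finRotate (m + 2) = τ := mul_inv_eq_one.1 hπ1
    rw [← hτσ] at horb
    have h1 : (finRotate (m + 2)).cycleType.card = 1 := by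
      rw [cycleType_finRotate]; rfl
    have h2 : (univ.filter fun x => finRotate (m + 2) x = x) = ∅ := by
      refine filter_eq_empty_iff.2 fun x _ => ?_
      have : x ∈ (finRotate (m + 2)).support := by
        rw [support_finRotate]; exact mem_univ x
      exact Equiv.Perm.mem_support.1 this
    rw [cycleCount, h1, h2] at horb
    simp at horb
  set M := π.support.min' hne with hMdef
  have hM : π M ≠ M := Equiv.Perm.mem_support.1 (min'_mem _ hne)
  have all : ∀ k : ℕ, ∀ y : Fin (m + 2), (y : ℕ) ≤ k → π y ≠ y → π.SameCycle M y := by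
    intro k
    induction k with
    | zero =>
      intro y hy0 hyne
      rcases lt_trichotomy (π y) y with h | h | h
      · exact absurd (Fin.lt_def.1 h) (by omega)
      · exact absurd h hyne
      · have hfix := key y h
        have hMy : M = y := le_antisymm (min'_le _ _ (Equiv.Perm.mem_support.2 hyne))
          (le_of_not_gt fun hc => hM (hfix M hc))
        rw [hMy]
    | succ k ih =>
      intro y hyk hyne
      rcases lt_trichotomy (π y) y with h | h | h
      · have hπy : π (π y) ≠ π y := fun hc => hyne (π.injective hc)
        have h1 : π.SameCycle M (π y) := ih (π y) (by have := Fin.lt_def.1 h; omega) hπy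
        have h0 : π.SameCycle y (π y) := ⟨1, by simp⟩
        exact h1.trans h0.symm
      · exact absurd h hyne
      · have hfix := key y h
        have hMy : M = y := le_antisymm (min'_le _ _ (Equiv.Perm.mem_support.2 hyne))
          (le_of_not_gt fun hc => hM (hfix M hc))
        rw [hMy]
  have hcyc : π.IsCycle := ⟨M, hM, fun y hy => all (y : ℕ) y le_rfl hy⟩
  exact Equiv.Perm.card_cycleType_eq_one.2 hcyc
end

section
/- Let n ≥ 2, let p satisfy 1 ≤ p ≤ n−1 with p ≠ n−p, and let g ≥ 0. The number of set partitions of {1,…,n} into two blocks, one of cardinality p and one of cardinality n−p, whose genus equals g, is (n/(g+1))·C(p−1, g)·C(n−p−1, g), where C(a,b) denotes the binomial coefficient (equal to 0 when b > a). -/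
/-!
STATEMENT 3: Let n ≥ 2, 1 ≤ p ≤ n−1 with p ≠ n−p, and g ≥ 0.  The number of set
partitions of {1,…,n} into two blocks, one of cardinality p and one of cardinality
n−p, whose genus equals g, is (n/(g+1))·C(p−1,g)·C(n−p−1,g).
-/

open Finset

variable {n : ℕ}

/-- The increasing cycle on a block `b`, as a permutation of `Fin n`. -/
def blockPerm (b : Finset (Fin n)) : Equiv.Perm (Fin n) :=
  (b.sort (· ≤ ·)).formPerm

/-- The permutation `τ` associated to a set partition: the product of the increasing
cycles on the blocks. -/
def partPerm (P : Finpartition (univ : Finset (Fin n))) : Equiv.Perm (Fin n) :=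
  P.parts.noncommProd blockPerm (by
    intro a ha b hb hab
    have hd : Disjoint a b := P.disjoint ha hb hab
    apply Equiv.Perm.Disjoint.commute
    intro x
    by_cases hx : x ∈ a
    · right
      apply List.formPerm_apply_of_notMem
      rw [Finset.mem_sort]
      exact fun hxb => Finset.disjoint_left.mp hd hx hxb
    · left
      apply List.formPerm_apply_of_notMem
      rw [Finset.mem_sort]
      exact hx)

/-- `f(α)`: the number of cycles of `σ ∘ τ⁻¹`, where `σ = (1,2,…,n)`. -/
def partFaces (P : Finpartition (univ : Finset (Fin n))) : ℕ :=
  cycleCount (finRotate n * (partPerm P)⁻¹)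

/-- The genus of the set partition `P` equals `g`, i.e. `2g = n + 1 - k - f(α)` where
`k` is the number of blocks. -/
def HasGenus (P : Finpartition (univ : Finset (Fin n))) (g : ℕ) : Prop :=
  n + 1 = P.parts.card + partFaces P + 2 * g

theorem blockPerm_not_mem {b : Finset (Fin n)} {x : Fin n} (hx : x ∉ b) :
    blockPerm b x = x := by
  apply List.formPerm_apply_of_notMem
  rwa [Finset.mem_sort]

theorem blockPerm_emb (b : Finset (Fin n)) (i : Fin b.card) :
    blockPerm b (b.orderEmbOfFin rfl i) =
      b.orderEmbOfFin rfl ⟨(i + 1) % b.card, Nat.mod_lt _ i.pos⟩ := by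
  have hlen : (b.sort (· ≤ ·)).length = b.card := Finset.length_sort _
  have h1 : b.orderEmbOfFin rfl i = (b.sort (· ≤ ·))[(i : ℕ)]'(by rw [hlen]; exact i.2) :=
    Finset.orderEmbOfFin_apply b rfl i
  have h2 := List.formPerm_apply_getElem (b.sort (· ≤ ·)) (b.sort_nodup _) i
    (by rw [hlen]; exact i.2)
  rw [blockPerm, h1, h2, Finset.orderEmbOfFin_apply]
  congr 1
  simp [hlen]

theorem exists_emb_eq {b : Finset (Fin n)} {x : Fin n} (hx : x ∈ b) :
    ∃ i : Fin b.card, b.orderEmbOfFin rfl i = x := by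
  refine ⟨(b.orderIsoOfFin rfl).symm ⟨x, hx⟩, ?_⟩
  rw [← Finset.coe_orderIsoOfFin_apply]
  simp

theorem blockPerm_of_exists_gt {b : Finset (Fin n)} {x : Fin n} (hx : x ∈ b)
    (h : (b.filter fun y => x < y).Nonempty) :
    blockPerm b x = (b.filter fun y => x < y).min' h := by
  obtain ⟨i, rfl⟩ := exists_emb_eq hx
  have hlt : (i : ℕ) + 1 < b.card := by
    rcases Nat.lt_or_ge ((i : ℕ) + 1) b.card with h' | h'
    · exact h'
    · exfalso
      obtain ⟨y, hy⟩ := h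
      rw [Finset.mem_filter] at hy
      obtain ⟨j, rfl⟩ := exists_emb_eq hy.1
      have : (i : Fin b.card) < j := by
        have := (b.orderEmbOfFin rfl).lt_iff_lt.mp hy.2
        exact this
      omega
  have key : blockPerm b (b.orderEmbOfFin rfl i) = b.orderEmbOfFin rfl ⟨(i : ℕ) + 1, hlt⟩ :=
    (blockPerm_emb b i).trans (by congr 1; exact Fin.ext (Nat.mod_eq_of_lt hlt))
  rw [key]
  apply le_antisymm
  · apply Finset.le_min'
    intro y hy
    rw [Finset.mem_filter] at hy
    obtain ⟨j, rfl⟩ := exists_emb_eq hy.1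
    apply (b.orderEmbOfFin rfl).monotone
    have : (i : Fin b.card) < j := (b.orderEmbOfFin rfl).lt_iff_lt.mp hy.2
    exact Fin.mk_le_of_le_val (by omega)
  · apply Finset.min'_le
    rw [Finset.mem_filter]
    exact ⟨Finset.orderEmbOfFin_mem _ _ _,
      (b.orderEmbOfFin rfl).strictMono (by exact Fin.mk_lt_mk.mpr (by omega) |>.trans_le le_rfl)⟩

theorem blockPerm_of_max {b : Finset (Fin n)} {x : Fin n} (hx : x ∈ b)
    (h : ∀ y ∈ b, y ≤ x) :
    blockPerm b x = b.min' ⟨x, hx⟩ := by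
  obtain ⟨i, rfl⟩ := exists_emb_eq hx
  have hi : (i : ℕ) + 1 = b.card := by
    rcases Nat.lt_or_ge ((i : ℕ) + 1) b.card with h' | h'
    · exfalso
      have hmem := Finset.orderEmbOfFin_mem b rfl ⟨(i : ℕ) + 1, h'⟩
      have := h _ hmem
      have hlt : b.orderEmbOfFin rfl i < b.orderEmbOfFin rfl ⟨(i : ℕ) + 1, h'⟩ :=
        (b.orderEmbOfFin rfl).strictMono (Fin.mk_lt_mk.mpr (by omega) |>.trans_le le_rfl)
      exact absurd this (not_le.mpr hlt)
    · omega
  have key : blockPerm b (b.orderEmbOfFin rfl i) = b.orderEmbOfFin rfl ⟨0, i.pos⟩ :=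
    (blockPerm_emb b i).trans (by congr 1; exact Fin.ext (by simp [hi]))
  rw [key]
  exact Finset.orderEmbOfFin_zero rfl i.pos

def bnd [NeZero n] (S : Finset (Fin n)) : Finset (Fin n) :=
  (S \ S.image (· + 1)) ∪ (S.image (· + 1) \ S)

theorem fin_val_add_one [NeZero n] (hn : 2 ≤ n) (y : Fin n) :
    (y + 1).val = if y.val + 1 = n then 0 else y.val + 1 := by
  have h1 : ((1 : Fin n)).val = 1 := by rw [Fin.val_one']; exact Nat.mod_eq_of_lt (by omega)
  have hy := y.isLt
  have h2 : (y + 1).val = (y.val + 1) % n := by rw [Fin.val_add, h1]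
  rw [h2]
  split
  · next h => rw [h, Nat.mod_self]
  · next h => exact Nat.mod_eq_of_lt (by omega)

theorem fin_val_sub_one [NeZero n] (hn : 2 ≤ n) (y : Fin n) :
    (y - 1).val = if y.val = 0 then n - 1 else y.val - 1 := by
  have h1 : ((1 : Fin n)).val = 1 := by rw [Fin.val_one']; exact Nat.mod_eq_of_lt (by omega)
  have hy := y.isLt
  have h2 : (y - 1).val = (n - 1 + y.val) % n := by rw [Fin.sub_def]; simp [Nat.mod_eq_of_lt (show 1 < n by omega)]
  rw [h2]
  split
  · next h => rw [h, Nat.add_zero]; exact Nat.mod_eq_of_lt (by omega)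
  · next h =>
      have h3 : n - 1 + y.val = (y.val - 1) + n := by omega
      rw [h3, Nat.add_mod_right]; exact Nat.mod_eq_of_lt (by omega)

theorem mem_image_add_one [NeZero n] {S : Finset (Fin n)} {y : Fin n} :
    y ∈ S.image (· + 1) ↔ y - 1 ∈ S := by
  simp only [Finset.mem_image]
  constructor
  · rintro ⟨z, hz, rfl⟩; rwa [add_sub_cancel_right]
  · intro h; exact ⟨y - 1, h, by rw [sub_add_cancel]⟩

theorem mem_bnd [NeZero n] {S : Finset (Fin n)} {y : Fin n} :
    y ∈ bnd S ↔ ¬((y - 1 ∈ S) ↔ (y ∈ S)) := by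
  simp only [bnd, Finset.mem_union, Finset.mem_sdiff, mem_image_add_one]
  tauto

theorem bnd_compl [NeZero n] {S : Finset (Fin n)} : bnd Sᶜ = bnd S := by
  ext y
  simp only [mem_bnd, Finset.mem_compl]
  tauto

theorem blockPerm_key [NeZero n] (hn : 2 ≤ n) (S : Finset (Fin n)) {x : Fin n} (hx : x ∈ S) :
    blockPerm S x = blockPerm (bnd S) (x + 1) := by
  have hva := fin_val_add_one (n := n) hn
  have hvs := fin_val_sub_one (n := n) hn
  have hx1 : (x + 1) - 1 = x := add_sub_cancel_right x 1
  have hxlt := x.isLt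
  by_cases hS1 : x + 1 ∈ S
  · -- x+1 in S : both sides are x+1
    have hrhs : blockPerm (bnd S) (x + 1) = x + 1 := by
      apply blockPerm_not_mem
      rw [mem_bnd, hx1]
      tauto
    rw [hrhs]
    by_cases hxa : x.val + 1 = n
    · have h0 : (x + 1).val = 0 := by rw [hva]; simp [hxa]
      have hmax : ∀ y ∈ S, y ≤ x := by
        intro y hy
        rw [Fin.le_def]
        have := y.isLt
        omega
      rw [blockPerm_of_max hx hmax]
      apply le_antisymm
      · exact Finset.min'_le _ _ hS1
      · rw [Fin.le_def, h0]; omega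
    · have h0 : (x + 1).val = x.val + 1 := by rw [hva]; simp [hxa]
      have hne : (S.filter fun y => x < y).Nonempty :=
        ⟨x + 1, Finset.mem_filter.mpr ⟨hS1, by rw [Fin.lt_def, h0]; omega⟩⟩
      rw [blockPerm_of_exists_gt hx hne]
      apply le_antisymm
      · exact Finset.min'_le _ _ (Finset.mem_filter.mpr ⟨hS1, by rw [Fin.lt_def, h0]; omega⟩)
      · apply Finset.le_min'
        intro y hy
        rw [Finset.mem_filter, Fin.lt_def] at hy
        rw [Fin.le_def, h0]
        omega
  · -- x+1 not in S
    have hbx : x + 1 ∈ bnd S := by rw [mem_bnd, hx1]; tauto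
    by_cases hfil : (S.filter fun y => x < y).Nonempty
    · set z := (S.filter fun y => x < y).min' hfil with hzdef
      have hzmem := Finset.mem_filter.mp ((S.filter fun y => x < y).min'_mem hfil)
      obtain ⟨hzS, hzx⟩ := hzmem
      have hzmin : ∀ w ∈ S, x < w → z ≤ w := fun w hw hw' =>
        Finset.min'_le _ _ (Finset.mem_filter.mpr ⟨hw, hw'⟩)
      rw [Fin.lt_def] at hzx
      have hzlt := z.isLt
      have hxa : x.val + 1 < n := by omega
      have hy0 : (x + 1).val = x.val + 1 := by rw [hva]; simp; omega
      have hzne : z ≠ x + 1 := fun h => hS1 (h ▸ hzS)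
      have hzv2 : x.val + 2 ≤ z.val := by
        rcases Nat.lt_or_ge (z.val) (x.val + 2) with h | h
        · exfalso; apply hzne; apply Fin.ext; omega
        · exact h
      have hz1 : (z - 1).val = z.val - 1 := by rw [hvs, if_neg (by omega)]
      have hz1S : z - 1 ∉ S := by
        intro h
        have := hzmin (z - 1) h (by rw [Fin.lt_def, hz1]; omega)
        rw [Fin.le_def, hz1] at this
        omega
      have hzbnd : z ∈ bnd S := by rw [mem_bnd]; tauto
      have hne2 : ((bnd S).filter fun y => x + 1 < y).Nonempty :=
        ⟨z, Finset.mem_filter.mpr ⟨hzbnd, by rw [Fin.lt_def, hy0]; omega⟩⟩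
      rw [blockPerm_of_exists_gt hbx hne2, blockPerm_of_exists_gt hx hfil]
      apply le_antisymm
      · apply Finset.le_min'
        intro w hw
        rw [Finset.mem_filter, Fin.lt_def, hy0] at hw
        obtain ⟨hwbnd, hwgt⟩ := hw
        by_contra hzw
        rw [not_le, Fin.lt_def] at hzw
        have hwS : w ∉ S := by
          intro hwS
          have := hzmin w hwS (by rw [Fin.lt_def]; omega)
          rw [Fin.le_def] at this
          omega
        have hw1S : w - 1 ∈ S := by rw [mem_bnd] at hwbnd; tauto
        have hw1 : (w - 1).val = w.val - 1 := by rw [hvs, if_neg (by omega)]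
        have := hzmin (w - 1) hw1S (by rw [Fin.lt_def, hw1]; omega)
        rw [Fin.le_def, hw1] at this
        omega
      · exact Finset.min'_le _ _ (Finset.mem_filter.mpr ⟨hzbnd, by rw [Fin.lt_def, hy0]; omega⟩)
    · have hmax : ∀ w ∈ S, w ≤ x := by
        intro w hw
        by_contra h
        exact hfil ⟨w, Finset.mem_filter.mpr ⟨hw, not_le.mp h⟩⟩
      rw [blockPerm_of_max hx hmax]
      set z := S.min' ⟨x, hx⟩ with hzdef
      have hzS : z ∈ S := S.min'_mem _
      have hzmin : ∀ w ∈ S, z ≤ w := fun w hw => S.min'_le _ hw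
      have hzx : z.val ≤ x.val := by have := hzmin x hx; rwa [Fin.le_def] at this
      by_cases hxa : x.val + 1 = n
      · -- x is the last element
        have hy0 : (x + 1).val = 0 := by rw [hva]; simp [hxa]
        have hzv : 1 ≤ z.val := by
          rcases Nat.eq_zero_or_pos z.val with h | h
          · exfalso; apply hS1
            have : x + 1 = z := Fin.ext (by omega)
            rwa [this]
          · exact h
        have hz1 : (z - 1).val = z.val - 1 := by rw [hvs, if_neg (by omega)]
        have hz1S : z - 1 ∉ S := by
          intro h
          have := hzmin (z - 1) h
          rw [Fin.le_def, hz1] at this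
          omega
        have hzbnd : z ∈ bnd S := by rw [mem_bnd]; tauto
        have hne2 : ((bnd S).filter fun y => x + 1 < y).Nonempty :=
          ⟨z, Finset.mem_filter.mpr ⟨hzbnd, by rw [Fin.lt_def, hy0]; omega⟩⟩
        rw [blockPerm_of_exists_gt hbx hne2]
        apply le_antisymm
        · apply Finset.le_min'
          intro w hw
          rw [Finset.mem_filter, Fin.lt_def, hy0] at hw
          obtain ⟨hwbnd, hwgt⟩ := hw
          by_contra hzw
          rw [not_le, Fin.lt_def] at hzw
          have hwS : w ∉ S := by
            intro hwS
            have := hzmin w hwS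
            rw [Fin.le_def] at this
            omega
          have hw1S : w - 1 ∈ S := by rw [mem_bnd] at hwbnd; tauto
          have hw1 : (w - 1).val = w.val - 1 := by rw [hvs, if_neg (by omega)]
          have := hzmin (w - 1) hw1S
          rw [Fin.le_def, hw1] at this
          omega
        · exact Finset.min'_le _ _ (Finset.mem_filter.mpr ⟨hzbnd, by rw [Fin.lt_def, hy0]; omega⟩)
      · -- x is not last; x+1 is the max of bnd S
        have hy0 : (x + 1).val = x.val + 1 := by rw [hva]; simp; omega
        have hxval : x.val ≤ n - 2 := by omega
        have hmax2 : ∀ w ∈ bnd S, w ≤ x + 1 := by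
          intro w hw
          rw [mem_bnd] at hw
          rw [Fin.le_def, hy0]
          by_cases hwS : w ∈ S
          · have := hmax w hwS; rw [Fin.le_def] at this; omega
          · have hw1S : w - 1 ∈ S := by tauto
            have h3 := hmax _ hw1S
            rw [Fin.le_def, hvs] at h3
            by_cases h0 : w.val = 0
            · omega
            · rw [if_neg h0] at h3; omega
        rw [blockPerm_of_max hbx hmax2]
        have hzbnd : z ∈ bnd S := by
          rw [mem_bnd]
          have hz1S : z - 1 ∉ S := by
            intro h
            have h2 := hzmin (z - 1) h
            have h3 := hmax (z - 1) h
            rw [Fin.le_def, hvs] at h2 h3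
            by_cases h0 : z.val = 0
            · rw [if_pos h0] at h3; omega
            · rw [if_neg h0] at h2; omega
          tauto
        apply le_antisymm
        · apply Finset.le_min'
          intro w hw
          rw [mem_bnd] at hw
          by_cases hwS : w ∈ S
          · exact hzmin w hwS
          · have hw1S : w - 1 ∈ S := by tauto
            have h3 := hmax _ hw1S
            have h2 := hzmin _ hw1S
            rw [Fin.le_def, hvs] at h2 h3
            by_cases h0 : w.val = 0
            · rw [if_pos h0] at h3; omega
            · rw [if_neg h0] at h2
              rw [Fin.le_def]
              omega
        · exact Finset.min'_le _ _ hzbnd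

section Genus
variable [NeZero n]

theorem blockPerm_mem {b : Finset (Fin n)} {x : Fin n} (hx : x ∈ b) :
    blockPerm b x ∈ b := by
  obtain ⟨i, rfl⟩ := exists_emb_eq hx
  rw [blockPerm_emb]
  exact Finset.orderEmbOfFin_mem _ _ _

theorem tau_mul (hn : 2 ≤ n) (S : Finset (Fin n)) :
    blockPerm S * blockPerm Sᶜ = blockPerm (bnd S) * Equiv.addRight (1 : Fin n) := by
  refine Equiv.ext fun x => ?_
  simp only [Equiv.Perm.coe_mul, Function.comp_apply, Equiv.coe_addRight]
  by_cases hx : x ∈ S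
  · have h1 : x ∉ Sᶜ := by simp [hx]
    rw [blockPerm_not_mem h1, blockPerm_key hn S hx]
  · have hx' : x ∈ Sᶜ := by simp [hx]
    have h1 : blockPerm Sᶜ x ∈ Sᶜ := blockPerm_mem hx'
    rw [blockPerm_not_mem (by simpa using h1)]
    rw [blockPerm_key hn Sᶜ hx', bnd_compl]

theorem cycleCount_inv_blockPerm (b : Finset (Fin n)) (hb : 2 ≤ b.card) :
    cycleCount (blockPerm b)⁻¹ = 1 + (n - b.card) := by
  have hnodup : (b.sort (· ≤ ·)).Nodup := b.sort_nodup _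
  have hlen : (b.sort (· ≤ ·)).length = b.card := Finset.length_sort _
  have hcyc : (blockPerm b).IsCycle := List.isCycle_formPerm hnodup (by omega)
  have hcyc' : ((blockPerm b)⁻¹).IsCycle := hcyc.inv
  have hsupp : (blockPerm b).support = b := by
    rw [blockPerm, List.support_formPerm_of_nodup _ hnodup, Finset.sort_toFinset]
    intro y hy
    rw [hy] at hlen
    simp at hlen
    omega
  have hsupp' : ((blockPerm b)⁻¹).support = b := by rw [Equiv.Perm.support_inv, hsupp]
  rw [cycleCount, hcyc'.cycleType, hsupp']
  have hfix : (univ.filter fun x => (blockPerm b)⁻¹ x = x) = bᶜ := by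
    ext y
    simp only [Finset.mem_filter, Finset.mem_univ, true_and, Finset.mem_compl]
    rw [← Equiv.Perm.notMem_support, hsupp']
  rw [hfix, Finset.card_compl]
  simp

theorem card_bnd (S : Finset (Fin n)) :
    (bnd S).card = 2 * (S \ S.image (· + 1)).card := by
  have hinj : Function.Injective (fun y : Fin n => y + 1) := add_left_injective 1
  have hcard : (S.image (· + 1)).card = S.card := Finset.card_image_of_injective _ hinj
  have h1 : (S \ S.image (· + 1)).card + (S ∩ S.image (· + 1)).card = S.card :=
    Finset.card_sdiff_add_card_inter _ _
  have h2 : (S.image (· + 1) \ S).card + (S.image (· + 1) ∩ S).card = S.card := by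
    rw [Finset.card_sdiff_add_card_inter, hcard]
  rw [Finset.inter_comm] at h2
  have hdisj : Disjoint (S \ S.image (· + 1)) (S.image (· + 1) \ S) :=
    disjoint_sdiff_sdiff
  rw [bnd, Finset.card_union_of_disjoint hdisj]
  omega

open Fin.NatCast in
theorem runStarts_nonempty {S : Finset (Fin n)} (hS : S.Nonempty) (hSc : Sᶜ.Nonempty) :
    (S \ S.image (· + 1)).Nonempty := by
  by_contra h
  rw [Finset.not_nonempty_iff_eq_empty, Finset.sdiff_eq_empty_iff_subset] at h
  have hstep : ∀ y ∈ S, y - 1 ∈ S := by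
    intro y hy
    have := h hy
    rwa [mem_image_add_one] at this
  have hall : ∀ (k : ℕ) (y : Fin n), y ∈ S → y - (k : Fin n) ∈ S := by
    intro k
    induction k with
    | zero => intro y hy; simpa using hy
    | succ m ih =>
        intro y hy
        have : y - ((m : Fin n) + 1) = (y - (m : Fin n)) - 1 := by rw [sub_sub]
        rw [Nat.cast_add, Nat.cast_one, this]
        exact hstep _ (ih y hy)
  obtain ⟨a, ha⟩ := hS
  obtain ⟨b, hb⟩ := hSc
  rw [Finset.mem_compl] at hb
  apply hb
  have := hall ((a - b : Fin n)).val a ha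
  rwa [Fin.cast_val_eq_self, sub_sub_cancel] at this
theorem finRotate_eq_addRight (m : ℕ) :
    finRotate (m + 1) = Equiv.addRight (1 : Fin (m + 1)) := by
  ext i
  simp [finRotate_succ_apply]

def twoPart [NeZero n] (S : Finset (Fin n)) (hS : S.Nonempty) (hSc : Sᶜ.Nonempty) :
    Finpartition (univ : Finset (Fin n)) where
  parts := {S, Sᶜ}
  supIndep := by
    rw [Finset.supIndep_pair (fun h => by
      obtain ⟨a, ha⟩ := hS
      have : a ∈ Sᶜ := h ▸ ha
      simp [ha] at this)]
    exact disjoint_compl_right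
  sup_parts := by
    rw [Finset.sup_insert, Finset.sup_singleton, id]
    simp [Finset.union_compl]
  bot_notMem := by
    simp only [Finset.bot_eq_empty, Finset.mem_insert, Finset.mem_singleton]
    push_neg
    constructor
    · exact fun h => hS.ne_empty h.symm
    · exact fun h => hSc.ne_empty h.symm

theorem twoPart_ne [NeZero n] {S : Finset (Fin n)} (hS : S.Nonempty) (hSc : Sᶜ.Nonempty) :
    S ≠ Sᶜ := fun h => by
  obtain ⟨a, ha⟩ := hS
  have : a ∈ Sᶜ := h ▸ ha
  simp [ha] at this

theorem partPerm_twoPart [NeZero n] (S : Finset (Fin n)) (hS : S.Nonempty)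
    (hSc : Sᶜ.Nonempty) :
    partPerm (twoPart S hS hSc) = blockPerm S * blockPerm Sᶜ := by
  rw [partPerm]
  have hne : S ∉ ({Sᶜ} : Finset (Finset (Fin n))) := by
    simp [twoPart_ne hS hSc]
  exact (Finset.noncommProd_insert_of_notMem {Sᶜ} S blockPerm _ hne).trans
    (by rw [Finset.noncommProd_singleton])

theorem hasGenus_iff [NeZero n] (hn : 2 ≤ n) (S : Finset (Fin n)) (hS : S.Nonempty)
    (hSc : Sᶜ.Nonempty) (g : ℕ) :
    HasGenus (twoPart S hS hSc) g ↔ (S \ S.image (· + 1)).card = g + 1 := by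
  obtain ⟨m, rfl⟩ : ∃ m, n = m + 1 := ⟨n - 1, by omega⟩
  have hr : 1 ≤ (S \ S.image (· + 1)).card :=
    Finset.card_pos.mpr (runStarts_nonempty hS hSc)
  have hbndcard := card_bnd S
  have hble : (bnd S).card ≤ m + 1 := by
    have := Finset.card_le_univ (bnd S)
    simpa using this
  have hfaces : partFaces (twoPart S hS hSc) = 1 + ((m + 1) - (bnd S).card) := by
    rw [partFaces, partPerm_twoPart, tau_mul hn S, finRotate_eq_addRight]
    have : Equiv.addRight (1 : Fin (m + 1)) *
        (blockPerm (bnd S) * Equiv.addRight (1 : Fin (m + 1)))⁻¹ = (blockPerm (bnd S))⁻¹ := by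
      group
    rw [this]
    exact cycleCount_inv_blockPerm (bnd S) (by omega)
  have hparts : (twoPart S hS hSc).parts.card = 2 :=
    Finset.card_pair (twoPart_ne hS hSc)
  rw [HasGenus, hparts, hfaces]
  omega

end Genus


def runsN (S : Finset ℕ) : ℕ := (S \ S.image (· + 1)).card

def KsetN (n p m : ℕ) : Finset (Finset ℕ) :=
  (Finset.range n).powerset.filter
    (fun S => S.card = p ∧ 0 ∈ S ∧ n - 1 ∉ S ∧ runsN S = m)

def LsetN (n p m : ℕ) : Finset (Finset ℕ) :=
  (Finset.range n).powerset.filter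
    (fun S => S.card = p ∧ 0 ∈ S ∧ n - 1 ∈ S ∧ runsN S = m)

theorem zero_mem_runsN {S : Finset ℕ} (h : 0 ∈ S) : 0 ∈ S \ S.image (· + 1) := by
  simp only [Finset.mem_sdiff, Finset.mem_image]
  exact ⟨h, by rintro ⟨z, hz, h0⟩; omega⟩

theorem runsN_pos {S : Finset ℕ} (h : 0 ∈ S) : 1 ≤ runsN S :=
  Finset.card_pos.mpr ⟨0, zero_mem_runsN h⟩

theorem KsetN_m_zero (n p : ℕ) : KsetN n p 0 = ∅ := by
  rw [Finset.eq_empty_iff_forall_notMem]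
  intro S hS
  rw [KsetN, Finset.mem_filter] at hS
  have := runsN_pos hS.2.2.1
  omega

theorem KsetN_p_zero (n m : ℕ) : KsetN n 0 m = ∅ := by
  rw [Finset.eq_empty_iff_forall_notMem]
  intro S hS
  rw [KsetN, Finset.mem_filter] at hS
  obtain ⟨_, hcard, h0, _, _⟩ := hS
  have : 0 < S.card := Finset.card_pos.mpr ⟨0, h0⟩
  omega

theorem LsetN_p_zero (n m : ℕ) : LsetN n 0 m = ∅ := by
  rw [Finset.eq_empty_iff_forall_notMem]
  intro S hS
  rw [LsetN, Finset.mem_filter] at hS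
  obtain ⟨_, hcard, h0, _, _⟩ := hS
  have : 0 < S.card := Finset.card_pos.mpr ⟨0, h0⟩
  omega

theorem KsetN_p_large {n p : ℕ} (h : n ≤ p) (m : ℕ) : KsetN n p m = ∅ := by
  rw [Finset.eq_empty_iff_forall_notMem]
  intro S hS
  rw [KsetN, Finset.mem_filter, Finset.mem_powerset] at hS
  obtain ⟨hsub, hcard, h0, hlast, _⟩ := hS
  rcases Nat.eq_zero_or_pos n with hn | hn
  · subst hn; exact absurd (hsub h0) (by simp)
  · have hsub2 : S ⊆ Finset.range (n - 1) := by
      intro x hx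
      have h1 := hsub hx
      rw [Finset.mem_range] at h1 ⊢
      have : x ≠ n - 1 := fun he => hlast (he ▸ hx)
      omega
    have := Finset.card_le_card hsub2
    rw [hcard, Finset.card_range] at this
    omega

theorem LsetN_p_large {n p : ℕ} (h : n < p) (m : ℕ) : LsetN n p m = ∅ := by
  rw [Finset.eq_empty_iff_forall_notMem]
  intro S hS
  rw [LsetN, Finset.mem_filter, Finset.mem_powerset] at hS
  obtain ⟨hsub, hcard, _, _, _⟩ := hS
  have := Finset.card_le_card hsub
  rw [hcard, Finset.card_range] at this
  omega

theorem downward_closed_eq_range {S : Finset ℕ} (h0 : 0 ∈ S)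
    (h : ∀ y ∈ S, y ≠ 0 → y - 1 ∈ S) : S = Finset.range S.card := by
  have hd : ∀ d y, y ∈ S → y - d ∈ S := by
    intro d
    induction d with
    | zero => intro y hy; simpa using hy
    | succ k ih =>
        intro y hy
        have h1 := ih y hy
        rcases Nat.eq_zero_or_pos (y - k) with h2 | h2
        · have : y - (k + 1) = y - k := by omega
          rw [this]; exact h1
        · have : y - (k + 1) = (y - k) - 1 := by omega
          rw [this]; exact h _ h1 (by omega)
  have hne : S.Nonempty := ⟨0, h0⟩
  have hM : S = Finset.range (S.max' hne + 1) := by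
    apply Finset.Subset.antisymm
    · intro x hx
      rw [Finset.mem_range]
      have := S.le_max' x hx
      omega
    · intro j hj
      rw [Finset.mem_range] at hj
      have := hd (S.max' hne - j) (S.max' hne) (S.max'_mem hne)
      have he : S.max' hne - (S.max' hne - j) = j := by omega
      rwa [he] at this
  rw [hM, Finset.card_range]

theorem runsN_one_eq_range {S : Finset ℕ} (h0 : 0 ∈ S) (h1 : runsN S = 1) :
    S = Finset.range S.card := by
  apply downward_closed_eq_range h0
  intro y hy hyne
  by_contra hy1
  have hymem : y ∈ S \ S.image (· + 1) := by
    simp only [Finset.mem_sdiff, Finset.mem_image]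
    refine ⟨hy, ?_⟩
    rintro ⟨z, hz, rfl⟩
    exact hy1 (by simpa using hz)
  have h2 : ({0, y} : Finset ℕ) ⊆ S \ S.image (· + 1) := by
    intro a ha
    rcases Finset.mem_insert.mp ha with rfl | ha
    · exact zero_mem_runsN h0
    · rwa [Finset.mem_singleton.mp ha]
  have := Finset.card_le_card h2
  rw [Finset.card_pair (by omega : (0:ℕ) ≠ y)] at this
  rw [runsN] at h1
  omega

theorem runsN_range {k : ℕ} (hk : 1 ≤ k) : runsN (Finset.range k) = 1 := by
  rw [runsN]
  have : Finset.range k \ (Finset.range k).image (· + 1) = {0} := by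
    ext y
    simp only [Finset.mem_sdiff, Finset.mem_range, Finset.mem_image,
      Finset.mem_singleton]
    constructor
    · rintro ⟨hy, hno⟩
      by_contra hy0
      exact hno ⟨y - 1, by omega, by omega⟩
    · rintro rfl
      exact ⟨by omega, by rintro ⟨z, hz, h⟩; omega⟩
  rw [this, Finset.card_singleton]

theorem LsetN_top (n m : ℕ) :
    (LsetN n n m).card = if m = 1 ∧ 1 ≤ n then 1 else 0 := by
  have hchar : ∀ S ∈ LsetN n n m, S = Finset.range n := by
    intro S hS
    rw [LsetN, Finset.mem_filter, Finset.mem_powerset] at hS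
    exact Finset.eq_of_subset_of_card_le hS.1 (by rw [hS.2.1, Finset.card_range])
  split
  · next h =>
      obtain ⟨hm, hn⟩ := h
      have : LsetN n n m = {Finset.range n} := by
        apply Finset.Subset.antisymm
        · intro S hS; rw [Finset.mem_singleton]; exact hchar S hS
        · intro S hS
          rw [Finset.mem_singleton] at hS
          subst hS hm
          rw [LsetN, Finset.mem_filter, Finset.mem_powerset]
          refine ⟨Finset.Subset.refl _, Finset.card_range n, by simp; omega,
            by simp; omega, runsN_range hn⟩
      rw [this, Finset.card_singleton]
  · next h =>
      rw [Finset.card_eq_zero, Finset.eq_empty_iff_forall_notMem]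
      intro S hS
      have hSr := hchar S hS
      rw [LsetN, Finset.mem_filter, Finset.mem_powerset] at hS
      obtain ⟨hsub, hcard, h0, hlast, hruns⟩ := hS
      have hn : 1 ≤ n := by
        by_contra hn
        have : n = 0 := by omega
        subst this
        simpa using hsub h0
      rw [hSr, runsN_range hn] at hruns
      exact h ⟨hruns.symm, hn⟩

theorem KsetN_split (n p m : ℕ) :
    KsetN (n + 1) p m = KsetN n p m ∪ LsetN n p m := by
  ext S
  simp only [KsetN, LsetN, Finset.mem_filter, Finset.mem_powerset, Finset.mem_union]
  constructor
  · rintro ⟨hsub, hcard, h0, hlast, hruns⟩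
    have hsub2 : S ⊆ Finset.range n := by
      intro x hx
      have := hsub hx
      rw [Finset.mem_range] at *
      have : x ≠ n := fun he => hlast (by simpa [he] using hx)
      omega
    by_cases hn1 : n - 1 ∈ S
    · right; exact ⟨hsub2, hcard, h0, hn1, hruns⟩
    · left; exact ⟨hsub2, hcard, h0, hn1, hruns⟩
  · rintro (⟨hsub, hcard, h0, hlast, hruns⟩ | ⟨hsub, hcard, h0, hlast, hruns⟩) <;>
    · have hnot : n ∉ S := fun h => by simpa using hsub h
      refine ⟨hsub.trans (by intro x; simp only [Finset.mem_range]; omega),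
        hcard, h0, by simpa using hnot, hruns⟩

theorem runsN_erase_eq {n : ℕ} {S : Finset ℕ} (hsub : S ⊆ Finset.range (n + 1))
    (hn : n ∈ S) :
    S.erase n \ (S.erase n).image (· + 1) = (S \ S.image (· + 1)).erase n := by
  ext y
  simp only [Finset.mem_sdiff, Finset.mem_erase, Finset.mem_image]
  constructor
  · rintro ⟨⟨hyn, hyS⟩, hno⟩
    refine ⟨hyn, hyS, ?_⟩
    rintro ⟨z, hz, rfl⟩
    have hzn : z ≠ n := by
      intro h
      subst h
      have := hsub hyS
      rw [Finset.mem_range] at this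
      omega
    exact hno ⟨z, ⟨hzn, hz⟩, rfl⟩
  · rintro ⟨hyn, hyS, hno⟩
    exact ⟨⟨hyn, hyS⟩, by rintro ⟨z, ⟨hzn, hz⟩, rfl⟩; exact hno ⟨z, hz, rfl⟩⟩

theorem runsN_erase {n : ℕ} {S : Finset ℕ} (hsub : S ⊆ Finset.range (n + 1))
    (hn : n ∈ S) (hn0 : 1 ≤ n) :
    runsN (S.erase n) = runsN S - (if n - 1 ∈ S then 0 else 1) := by
  rw [runsN, runsN, runsN_erase_eq hsub hn]
  by_cases h : n - 1 ∈ S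
  · rw [if_pos h]
    have : n ∉ S \ S.image (· + 1) := by
      simp only [Finset.mem_sdiff, Finset.mem_image, not_and, not_not]
      intro _
      exact ⟨n - 1, h, by omega⟩
    rw [Finset.erase_eq_of_notMem this]
    omega
  · rw [if_neg h]
    have : n ∈ S \ S.image (· + 1) := by
      simp only [Finset.mem_sdiff, Finset.mem_image]
      refine ⟨hn, ?_⟩
      rintro ⟨z, hz, hzn⟩
      have hz1 : z = n - 1 := by omega
      exact h (hz1 ▸ hz)
    rw [Finset.card_erase_of_mem this]

theorem runsN_insert {n : ℕ} {S' : Finset ℕ} (hsub : S' ⊆ Finset.range n)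
    (h0 : 0 ∈ S') (hn : 1 ≤ n) :
    runsN (insert n S') = runsN S' + (if n - 1 ∈ S' then 0 else 1) := by
  have hnotin : n ∉ S' := fun h => by simpa using hsub h
  have hsub2 : insert n S' ⊆ Finset.range (n + 1) := by
    intro x hx
    rcases Finset.mem_insert.mp hx with rfl | hx
    · simp
    · have := hsub hx; rw [Finset.mem_range] at *; omega
  have h1 := runsN_erase hsub2 (Finset.mem_insert_self n S') hn
  rw [Finset.erase_insert hnotin] at h1
  have h2 : (n - 1 ∈ insert n S') ↔ (n - 1 ∈ S') := by
    rw [Finset.mem_insert]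
    constructor
    · rintro (h | h)
      · omega
      · exact h
    · exact Or.inr
  have hpos : 1 ≤ runsN (insert n S') := runsN_pos (Finset.mem_insert_of_mem h0)
  by_cases h : n - 1 ∈ S'
  · rw [if_pos h]
    rw [if_pos (h2.mpr h)] at h1
    omega
  · rw [if_neg h]
    rw [if_neg (fun hc => h (h2.mp hc))] at h1
    omega

theorem LsetN_split (n p m : ℕ) (hn : 1 ≤ n) (hm : 1 ≤ m) :
    (LsetN (n + 1) p m).card =
      (LsetN n (p - 1) m).card + (KsetN n (p - 1) (m - 1)).card := by
  have hdisj : Disjoint (LsetN n (p - 1) m) (KsetN n (p - 1) (m - 1)) := by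
    rw [Finset.disjoint_left]
    intro S hS1 hS2
    rw [LsetN, Finset.mem_filter] at hS1
    rw [KsetN, Finset.mem_filter] at hS2
    exact hS2.2.2.2.1 hS1.2.2.2.1
  rw [← Finset.card_union_of_disjoint hdisj]
  apply Finset.card_bij (fun S _ => S.erase n)
  · -- maps into the union
    intro S hS
    rw [LsetN, Finset.mem_filter, Finset.mem_powerset] at hS
    obtain ⟨hsub, hcard, h0, hlast, hruns⟩ := hS
    have hlast' : n ∈ S := by simpa using hlast
    have hsub2 : S.erase n ⊆ Finset.range n := by
      intro x hx
      rw [Finset.mem_erase] at hx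
      have := hsub hx.2
      rw [Finset.mem_range] at *
      omega
    have hcard2 : (S.erase n).card = p - 1 := by
      rw [Finset.card_erase_of_mem hlast', hcard]
    have h02 : 0 ∈ S.erase n := Finset.mem_erase.mpr ⟨by omega, h0⟩
    have hruns2 := runsN_erase hsub hlast' hn
    rw [Finset.mem_union]
    by_cases hprev : n - 1 ∈ S
    · left
      rw [LsetN, Finset.mem_filter, Finset.mem_powerset]
      have hmem : n - 1 ∈ S.erase n := Finset.mem_erase.mpr ⟨by omega, hprev⟩
      refine ⟨hsub2, hcard2, h02, hmem, ?_⟩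
      rw [hruns2, if_pos hprev, hruns]
      omega
    · right
      rw [KsetN, Finset.mem_filter, Finset.mem_powerset]
      have hmem : n - 1 ∉ S.erase n := fun hc => hprev (Finset.mem_erase.mp hc).2
      refine ⟨hsub2, hcard2, h02, hmem, ?_⟩
      rw [hruns2, if_neg hprev, hruns]
  · -- injective
    intro S1 hS1 S2 hS2 heq
    rw [LsetN, Finset.mem_filter] at hS1 hS2
    have h1 : n ∈ S1 := by simpa using hS1.2.2.2.1
    have h2 : n ∈ S2 := by simpa using hS2.2.2.2.1
    have := congrArg (insert n) heq
    rwa [Finset.insert_erase h1, Finset.insert_erase h2] at this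
  · -- surjective
    intro S' hS'
    rw [Finset.mem_union] at hS'
    have hfacts : S' ⊆ Finset.range n ∧ S'.card = p - 1 ∧ 0 ∈ S' ∧
        runsN S' + (if n - 1 ∈ S' then 0 else 1) = m := by
      rcases hS' with h | h
      · rw [LsetN, Finset.mem_filter, Finset.mem_powerset] at h
        obtain ⟨hsub, hcard, h0, hl, hr⟩ := h
        exact ⟨hsub, hcard, h0, by rw [if_pos hl]; omega⟩
      · rw [KsetN, Finset.mem_filter, Finset.mem_powerset] at h
        obtain ⟨hsub, hcard, h0, hl, hr⟩ := h
        have hm1 : 1 ≤ runsN S' := runsN_pos h0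
        exact ⟨hsub, hcard, h0, by rw [if_neg hl]; omega⟩
    obtain ⟨hsub, hcard, h0, hruns⟩ := hfacts
    have hnotin : n ∉ S' := fun h => by simpa using hsub h
    have hp2 : 2 ≤ p := by
      have : 1 ≤ S'.card := Finset.card_pos.mpr ⟨0, h0⟩
      rcases Nat.lt_or_ge p 2 with h | h
      · interval_cases p
        · rw [LsetN_p_zero, KsetN_p_zero] at hS'
          simpa using hS'
        · simp only [Nat.sub_self] at hcard
          omega
      · exact h
    refine ⟨insert n S', ?_, Finset.erase_insert hnotin⟩
    rw [LsetN, Finset.mem_filter, Finset.mem_powerset]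
    refine ⟨?_, ?_, Finset.mem_insert_of_mem h0, ?_, ?_⟩
    · intro x hx
      rcases Finset.mem_insert.mp hx with rfl | hx
      · simp
      · have := hsub hx; rw [Finset.mem_range] at *; omega
    · rw [Finset.card_insert_of_notMem hnotin, hcard]; omega
    · simp
    · rw [runsN_insert hsub h0 hn, hruns]

theorem LsetN_m_one {n p : ℕ} (hpn : p < n) : (LsetN n p 1).card = 0 := by
  rw [Finset.card_eq_zero, Finset.eq_empty_iff_forall_notMem]
  intro S hS
  rw [LsetN, Finset.mem_filter, Finset.mem_powerset] at hS
  obtain ⟨hsub, hcard, h0, hlast, hruns⟩ := hS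
  have hrange := runsN_one_eq_range h0 hruns
  rw [hcard] at hrange
  rw [hrange, Finset.mem_range] at hlast
  have hn : 1 ≤ n := by omega
  omega

theorem KL_closed (n : ℕ) : ∀ p m : ℕ, 1 ≤ m →
    (1 ≤ p → p < n → (KsetN n p m).card = (p - 1).choose (m - 1) * (n - p - 1).choose (m - 1))
    ∧ (1 ≤ p → p < n → 2 ≤ m →
        (LsetN n p m).card = (p - 1).choose (m - 1) * (n - p - 1).choose (m - 2)) := by
  induction n with
  | zero => intro p m hm; exact ⟨fun _ h => absurd h (by omega), fun _ h => absurd h (by omega)⟩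
  | succ n ih =>
      intro p m hm
      constructor
      · -- K part
        intro hp hpn
        have hsplit := KsetN_split n p m
        have hdisj : Disjoint (KsetN n p m) (LsetN n p m) := by
          rw [Finset.disjoint_left]
          intro S hS1 hS2
          rw [KsetN, Finset.mem_filter] at hS1
          rw [LsetN, Finset.mem_filter] at hS2
          exact hS1.2.2.2.1 hS2.2.2.2.1
        rw [hsplit, Finset.card_union_of_disjoint hdisj]
        rcases Nat.lt_or_ge p n with hlt | hge
        · -- p < n
          have hK := (ih p m hm).1 hp hlt
          rw [hK]
          rcases Nat.lt_or_ge m 2 with hm1 | hm2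
          · -- m = 1
            have hmeq : m = 1 := by omega
            subst hmeq
            rw [LsetN_m_one hlt]
            simp only [Nat.sub_self, Nat.choose_zero_right, Nat.mul_one, Nat.add_zero]
          · have hL := (ih p m hm).2 hp hlt hm2
            rw [hL, ← Nat.mul_add]
            congr 1
            have h1 : n + 1 - p - 1 = (n - p - 1) + 1 := by omega
            have h2 : m - 1 = (m - 2) + 1 := by omega
            rw [h1, h2, Nat.choose_succ_succ]
            exact Nat.add_comm _ _
        · -- p = n
          have hpeq : p = n := by omega
          subst hpeq
          rw [Finset.card_eq_zero.mpr (KsetN_p_large (le_refl _) m), LsetN_top]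
          have h0 : p + 1 - p - 1 = 0 := by omega
          rw [h0]
          rcases Nat.lt_or_ge m 2 with hm1 | hm2
          · have hmeq : m = 1 := by omega
            subst hmeq
            rw [if_pos ⟨rfl, hp⟩]
            simp
          · rw [if_neg (by omega)]
            have h2 : m - 1 = (m - 2) + 1 := by omega
            rw [h2, Nat.choose_zero_succ, Nat.mul_zero]
      · -- L part
        intro hp hpn hm2
        have hsplit := LsetN_split n p m (by omega) hm
        rw [hsplit]
        rcases Nat.lt_or_ge p 2 with hp1 | hp2
        · have hpeq : p = 1 := by omega
          subst hpeq
          rw [Finset.card_eq_zero.mpr (by rw [Nat.sub_self]; exact LsetN_p_zero n m),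
            Finset.card_eq_zero.mpr (by rw [Nat.sub_self]; exact KsetN_p_zero n (m-1))]
          rw [Nat.sub_self, Nat.choose_eq_zero_of_lt (by omega), Nat.zero_mul]
        · have hplt : p - 1 < n := by omega
          have hp1' : 1 ≤ p - 1 := by omega
          have hK := (ih (p - 1) (m - 1) (by omega)).1 hp1' hplt
          have hL := (ih (p - 1) m hm).2 hp1' hplt hm2
          rw [hK, hL]
          have e1 : n - (p - 1) - 1 = n + 1 - p - 1 := by omega
          have e2 : m - 1 - 1 = m - 2 := by omega
          rw [e1, e2, ← Nat.add_mul]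
          congr 1
          have e3 : p - 1 - 1 = p - 2 := by omega
          have e4 : p - 1 = (p - 2) + 1 := by omega
          have e5 : m - 1 = (m - 2) + 1 := by omega
          rw [e3, e4, e5, Nat.choose_succ_succ]
          exact Nat.add_comm _ _

section Counting
variable [NeZero n]

theorem card_eq_sum_ite (A : Finset (Fin n)) :
    A.card = ∑ x : Fin n, if x ∈ A then 1 else 0 := by
  rw [Finset.sum_ite_mem, Finset.univ_inter, ← Finset.card_eq_sum_ones]

theorem rot_card (x : Fin n) (p r : ℕ) :
    (univ.filter (fun S : Finset (Fin n) =>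
        (S.card = p ∧ (S \ S.image (· + 1)).card = r) ∧ x ∈ S \ S.image (· + 1))).card =
    (univ.filter (fun S : Finset (Fin n) =>
        (S.card = p ∧ (S \ S.image (· + 1)).card = r) ∧ 0 ∈ S \ S.image (· + 1))).card := by
  have hinj : Function.Injective (fun y : Fin n => y - x) := sub_left_injective
  have hinj2 : Function.Injective (fun y : Fin n => y + x) := add_left_injective x
  have himg : ∀ S : Finset (Fin n),
      (S.image (fun y => y - x)) \ (S.image (fun y => y - x)).image (· + 1) =
      (S \ S.image (· + 1)).image (fun y => y - x) := by
    intro S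
    have hcomm : (S.image (fun y => y - x)).image (· + 1) =
        (S.image (· + 1)).image (fun y => y - x) := by
      rw [Finset.image_image, Finset.image_image]
      congr 1
      funext y
      simp only [Function.comp_apply]
      exact sub_add_eq_add_sub y x 1
    rw [hcomm, ← Finset.image_sdiff _ _ hinj]
  apply Finset.card_bij' (fun S _ => S.image (fun y => y - x))
    (fun S _ => S.image (fun y => y + x))
  case left_inv =>
    intro S _
    rw [Finset.image_image]
    have h : ((fun y : Fin n => y + x) ∘ fun y => y - x) = id := by
      funext y; simp
    rw [h, Finset.image_id]
  case right_inv =>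
    intro S _
    rw [Finset.image_image]
    have h : ((fun y : Fin n => y - x) ∘ fun y => y + x) = id := by
      funext y; simp
    rw [h, Finset.image_id]
  · intro S hS
    rw [Finset.mem_filter] at hS ⊢
    obtain ⟨-, ⟨hcard, hr⟩, hx⟩ := hS
    refine ⟨Finset.mem_univ _, ⟨?_, ?_⟩, ?_⟩
    · rw [Finset.card_image_of_injective _ hinj, hcard]
    · rw [himg, Finset.card_image_of_injective _ hinj, hr]
    · rw [himg, Finset.mem_image]
      exact ⟨x, hx, by simp⟩
  · intro S hS
    rw [Finset.mem_filter] at hS ⊢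
    obtain ⟨-, ⟨hcard, hr⟩, h0⟩ := hS
    have himg2 : (S.image (fun y => y + x)) \ (S.image (fun y => y + x)).image (· + 1) =
        (S \ S.image (· + 1)).image (fun y => y + x) := by
      have hcomm : (S.image (fun y => y + x)).image (· + 1) =
          (S.image (· + 1)).image (fun y => y + x) := by
        rw [Finset.image_image, Finset.image_image]
        congr 1
        funext y
        simp only [Function.comp_apply]
        exact add_right_comm y x 1
      rw [hcomm, ← Finset.image_sdiff _ _ hinj2]
    refine ⟨Finset.mem_univ _, ⟨?_, ?_⟩, ?_⟩
    · rw [Finset.card_image_of_injective _ hinj2, hcard]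
    · rw [himg2, Finset.card_image_of_injective _ hinj2, hr]
    · rw [himg2, Finset.mem_image]
      exact ⟨0, h0, by simp⟩

theorem RS_image_val (hn : 2 ≤ n) {S : Finset (Fin n)}
    (hlast : (⟨n - 1, by omega⟩ : Fin n) ∉ S) :
    (S.image Fin.val) \ (S.image Fin.val).image (· + 1) =
      (S \ S.image (· + 1)).image Fin.val := by
  ext y
  simp only [Finset.mem_sdiff, Finset.mem_image]
  constructor
  · rintro ⟨⟨s, hs, rfl⟩, hno⟩
    refine ⟨s, ⟨hs, ?_⟩, rfl⟩
    rintro ⟨t, ht, rfl⟩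
    have htn : t.val ≠ n - 1 := by
      intro h
      exact hlast (by rwa [show (⟨n - 1, by omega⟩ : Fin n) = t from Fin.ext h.symm])
    have hval : (t + 1).val = t.val + 1 := by
      rw [fin_val_add_one hn]
      have := t.isLt
      rw [if_neg (by omega)]
    exact hno ⟨t.val, ⟨t, ht, rfl⟩, by rw [← hval]⟩
  · rintro ⟨s, ⟨hs, hno⟩, rfl⟩
    refine ⟨⟨s, hs, rfl⟩, ?_⟩
    rintro ⟨z, ⟨t, ht, rfl⟩, hz⟩
    apply hno
    refine ⟨t, ht, ?_⟩
    have htn : t.val ≠ n - 1 := by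
      intro h
      exact hlast (by rwa [show (⟨n - 1, by omega⟩ : Fin n) = t from Fin.ext h.symm])
    have hval : (t + 1).val = t.val + 1 := by
      rw [fin_val_add_one hn]
      have := t.isLt
      rw [if_neg (by omega)]
    apply Fin.ext
    rw [hval, hz]

theorem val_card (hn : 2 ≤ n) (p r : ℕ) :
    (univ.filter (fun S : Finset (Fin n) =>
        (S.card = p ∧ (S \ S.image (· + 1)).card = r) ∧ 0 ∈ S \ S.image (· + 1))).card =
    (KsetN n p r).card := by
  have hlast0 : ((0 : Fin n) - 1) = (⟨n - 1, by omega⟩ : Fin n) := by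
    apply Fin.ext
    rw [fin_val_sub_one hn]
    simp
  apply Finset.card_bij' (fun S _ => S.image Fin.val)
    (fun A hA => A.attachFin (fun m hm => by
      rw [KsetN, Finset.mem_filter, Finset.mem_powerset] at hA
      have := hA.1 hm
      rwa [Finset.mem_range] at this))
  case left_inv =>
    intro S hS
    ext x
    rw [Finset.mem_attachFin, Finset.mem_image]
    constructor
    · rintro ⟨s, hs, hsv⟩
      rwa [show x = s from Fin.ext hsv.symm]
    · intro hx
      exact ⟨x, hx, rfl⟩
  case right_inv =>
    intro A hA
    ext y
    rw [Finset.mem_image]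
    constructor
    · rintro ⟨s, hs, rfl⟩
      rwa [Finset.mem_attachFin] at hs
    · intro hy
      have hylt : y < n := by
        rw [KsetN, Finset.mem_filter, Finset.mem_powerset] at hA
        have := hA.1 hy
        rwa [Finset.mem_range] at this
      exact ⟨⟨y, hylt⟩, by rwa [Finset.mem_attachFin], rfl⟩
  · -- forward membership
    intro S hS
    rw [Finset.mem_filter] at hS
    obtain ⟨-, ⟨hcard, hr⟩, h0⟩ := hS
    rw [Finset.mem_sdiff, mem_image_add_one, hlast0] at h0
    obtain ⟨h0S, hlastS⟩ := h0
    rw [KsetN, Finset.mem_filter, Finset.mem_powerset]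
    refine ⟨?_, ?_, ?_, ?_, ?_⟩
    · intro y hy
      rw [Finset.mem_image] at hy
      obtain ⟨s, _, rfl⟩ := hy
      rw [Finset.mem_range]
      exact s.isLt
    · rw [Finset.card_image_of_injective _ Fin.val_injective, hcard]
    · rw [Finset.mem_image]; exact ⟨0, h0S, rfl⟩
    · rw [Finset.mem_image]
      rintro ⟨s, hs, hsv⟩
      exact hlastS (by rwa [show (⟨n - 1, by omega⟩ : Fin n) = s from Fin.ext hsv.symm])
    · rw [runsN, RS_image_val hn hlastS,
        Finset.card_image_of_injective _ Fin.val_injective, hr]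
  · -- backward membership
    intro A hA
    have hAfacts := hA
    rw [KsetN, Finset.mem_filter, Finset.mem_powerset] at hAfacts
    obtain ⟨hsub, hcard, h0, hlast, hruns⟩ := hAfacts
    set S := A.attachFin _ with hSdef
    have hmemS : ∀ x : Fin n, x ∈ S ↔ x.val ∈ A := fun x => Finset.mem_attachFin _
    have hvalS : S.image Fin.val = A := by
      ext y
      rw [Finset.mem_image]
      constructor
      · rintro ⟨s, hs, rfl⟩; exact (hmemS s).mp hs
      · intro hy
        have hylt : y < n := by
          have := hsub hy; rwa [Finset.mem_range] at this
        exact ⟨⟨y, hylt⟩, (hmemS _).mpr hy, rfl⟩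
    have hlastS : (⟨n - 1, by omega⟩ : Fin n) ∉ S := by
      rw [hmemS]; exact hlast
    rw [Finset.mem_filter]
    have hcardS : S.card = p := by
      rw [← hcard, ← hvalS, Finset.card_image_of_injective _ Fin.val_injective]
    have hRS : (S \ S.image (· + 1)).card = r := by
      have := RS_image_val hn hlastS
      rw [hvalS] at this
      rw [← hruns, runsN, this, Finset.card_image_of_injective _ Fin.val_injective]
    refine ⟨Finset.mem_univ _, ⟨hcardS, hRS⟩, ?_⟩
    rw [Finset.mem_sdiff, mem_image_add_one, hlast0]
    exact ⟨(hmemS 0).mpr h0, hlastS⟩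
end Counting

section Final
variable [NeZero n]

theorem double_count (hn : 2 ≤ n) (p g : ℕ) :
    (g + 1) * (univ.filter (fun S : Finset (Fin n) =>
        S.card = p ∧ (S \ S.image (· + 1)).card = g + 1)).card
      = n * (KsetN n p (g + 1)).card := by
  set T := univ.filter (fun S : Finset (Fin n) =>
      S.card = p ∧ (S \ S.image (· + 1)).card = g + 1) with hT
  have h1 : ∑ S ∈ T, (S \ S.image (· + 1)).card = (g + 1) * T.card := by
    rw [Finset.sum_congr rfl (fun S hS => ((Finset.mem_filter.mp hS).2).2),
      Finset.sum_const, smul_eq_mul, Nat.mul_comm]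
  have h2 : ∑ S ∈ T, (S \ S.image (· + 1)).card
      = ∑ x : Fin n, (T.filter (fun S => x ∈ S \ S.image (· + 1))).card := by
    rw [Finset.sum_congr rfl (fun (S : Finset (Fin n)) _ => card_eq_sum_ite (S \ S.image (· + 1))),
      Finset.sum_comm]
    exact Finset.sum_congr rfl (fun x _ => (Finset.card_filter _ _).symm)
  have h3 : ∀ x : Fin n, (T.filter (fun S => x ∈ S \ S.image (· + 1))).card
      = (KsetN n p (g + 1)).card := by
    intro x
    rw [hT, Finset.filter_filter, rot_card x p (g + 1), val_card hn p (g + 1)]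
  rw [← h1, h2, Finset.sum_congr rfl (fun x _ => h3 x), Finset.sum_const, smul_eq_mul,
    Finset.card_univ, Fintype.card_fin]

end Final

theorem count_two_block_partitions_by_genus (n p g : ℕ) (hn : 2 ≤ n)
    (hp1 : 1 ≤ p) (hp2 : p ≤ n - 1) (hpn : p ≠ n - p) :
    (Nat.card {P : Finpartition (univ : Finset (Fin n)) //
        (∃ C₁ C₂ : Finset (Fin n), P.parts = {C₁, C₂} ∧ C₁ ≠ C₂ ∧
          C₁.card = p ∧ C₂.card = n - p) ∧ HasGenus P g} : ℚ) =
      (n : ℚ) / (g + 1) * ((p - 1).choose g) * ((n - p - 1).choose g) := by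
  haveI : NeZero n := ⟨by omega⟩
  set T := univ.filter (fun S : Finset (Fin n) =>
      S.card = p ∧ (S \ S.image (· + 1)).card = g + 1) with hT
  have hmemT : ∀ {S : Finset (Fin n)}, S ∈ T →
      S.card = p ∧ (S \ S.image (· + 1)).card = g + 1 :=
    fun h => (Finset.mem_filter.mp h).2
  have hSne : ∀ {S : Finset (Fin n)}, S ∈ T → S.Nonempty :=
    fun {S} h => Finset.card_pos.mp (by rw [(hmemT h).1]; omega)
  have hScne : ∀ {S : Finset (Fin n)}, S ∈ T → (Sᶜ : Finset (Fin n)).Nonempty :=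
    fun {S} h => Finset.card_pos.mp
      (by rw [Finset.card_compl, Fintype.card_fin, (hmemT h).1]; omega)
  have hccard : ∀ S : Finset (Fin n), (Sᶜ).card = n - S.card := fun S => by
    rw [Finset.card_compl, Fintype.card_fin]
  let f : {S : Finset (Fin n) // S ∈ T} →
      {P : Finpartition (univ : Finset (Fin n)) //
        (∃ C₁ C₂ : Finset (Fin n), P.parts = {C₁, C₂} ∧ C₁ ≠ C₂ ∧
          C₁.card = p ∧ C₂.card = n - p) ∧ HasGenus P g} :=
    fun S => ⟨twoPart S.1 (hSne S.2) (hScne S.2),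
      ⟨⟨S.1, S.1ᶜ, rfl, twoPart_ne (hSne S.2) (hScne S.2), (hmemT S.2).1, by
          rw [hccard, (hmemT S.2).1]⟩,
        (hasGenus_iff hn S.1 (hSne S.2) (hScne S.2) g).mpr (hmemT S.2).2⟩⟩
  have hbij : Function.Bijective f := by
    constructor
    · intro a b hab
      have hparts := congrArg (fun x => (x.1 : Finpartition (univ : Finset (Fin n))).parts) hab
      simp only [f] at hparts
      have hmem : a.1 ∈ ({b.1, b.1ᶜ} : Finset (Finset (Fin n))) := by
        rw [show ({b.1, b.1ᶜ} : Finset (Finset (Fin n))) = (twoPart b.1 (hSne b.2)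
          (hScne b.2)).parts from rfl, ← hparts]
        exact Finset.mem_insert_self _ _
      rcases Finset.mem_insert.mp hmem with h | h
      · exact Subtype.ext h
      · exfalso
        rw [Finset.mem_singleton] at h
        have hc1 : a.1.card = p := (hmemT a.2).1
        have hc2 : a.1.card = n - p := by rw [h, hccard, (hmemT b.2).1]
        exact hpn (hc1 ▸ hc2)
    · rintro ⟨P, ⟨C₁, C₂, hparts, hne, h1, h2⟩, hgen⟩
      have hmem1 : C₁ ∈ P.parts := by rw [hparts]; exact Finset.mem_insert_self _ _
      have hmem2 : C₂ ∈ P.parts := by rw [hparts]; simp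
      have hdisj : Disjoint C₁ C₂ := P.disjoint hmem1 hmem2 hne
      have hunion : C₁ ∪ C₂ = univ := by
        have := P.sup_parts
        rw [hparts] at this
        rw [← this, Finset.sup_insert, Finset.sup_singleton]
        rfl
      have hcomp : C₂ = C₁ᶜ := by
        ext a
        rw [Finset.mem_compl]
        have ha : a ∈ C₁ ∪ C₂ := by rw [hunion]; exact Finset.mem_univ a
        rw [Finset.mem_union] at ha
        have hd := Finset.disjoint_left.mp hdisj
        constructor
        · intro h hc; exact hd hc h
        · intro h; tauto
      have hC1ne : C₁.Nonempty := Finset.card_pos.mp (by rw [h1]; omega)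
      have hC1cne : (C₁ᶜ : Finset (Fin n)).Nonempty :=
        Finset.card_pos.mp (by rw [hccard, h1]; omega)
      have hPeq : P = twoPart C₁ hC1ne hC1cne := by
        apply Finpartition.ext
        rw [hparts, hcomp]
        rfl
      have hruns : (C₁ \ C₁.image (· + 1)).card = g + 1 := by
        rw [hPeq] at hgen
        exact (hasGenus_iff hn C₁ hC1ne hC1cne g).mp hgen
      have hC1T : C₁ ∈ T := by
        rw [hT, Finset.mem_filter]
        exact ⟨Finset.mem_univ _, h1, hruns⟩
      refine ⟨⟨C₁, hC1T⟩, ?_⟩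
      apply Subtype.ext
      exact hPeq.symm
  have hcard1 : Nat.card {P : Finpartition (univ : Finset (Fin n)) //
      (∃ C₁ C₂ : Finset (Fin n), P.parts = {C₁, C₂} ∧ C₁ ≠ C₂ ∧
        C₁.card = p ∧ C₂.card = n - p) ∧ HasGenus P g} = T.card := by
    rw [← Nat.card_eq_of_bijective f hbij, Nat.card_eq_fintype_card, Fintype.card_coe]
  rw [hcard1]
  have hK : (KsetN n p (g + 1)).card = (p - 1).choose g * (n - p - 1).choose g := by
    have := (KL_closed n p (g + 1) (by omega)).1 hp1 (by omega)
    simpa using this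
  have hcount := double_count (n := n) hn p g
  rw [hK, ← hT] at hcount
  have hQ : ((g : ℚ) + 1) * (T.card : ℚ) =
      (n : ℚ) * (((p - 1).choose g : ℚ) * ((n - p - 1).choose g : ℚ)) := by
    exact_mod_cast congrArg (Nat.cast : ℕ → ℚ) hcount
  have hg : ((g : ℚ) + 1) ≠ 0 := by positivity
  field_simp
  linarith [hQ]
end
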